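/- arXiv:1012.5598 — 2 statements merged into one kernel-verified Lean document; each statement's English description precedes it below -/
import Mathlib

section
/- In an LA-semigroup S with left identity, a²S = Sa² for every a ∈ S. -/
/-!
Two identities of LA-semigroups with left identity `e` do all the work:
`(a b) x = (x e)(b a)` and `y (b a) = (a b)(y e)`. They show that every element of `(a b) S`
lies in `S (b a)` and conversely, so `(a b) S = S (b a)`; take `b = a`.
-/

open Pointwise

namespace LASemigroup

variable {S : Type*} [Mul S] (linv : ∀ a b c : S, a * b * c = c * b * a)
include linv

theorem mul_mul_mul_comm (a b c d : S) : a * b * (c * d) = a * c * (b * d) := by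
  rw [linv a b (c * d), linv c d b, linv (b * d) c a]

variable {e : S} (he : ∀ a : S, e * a = a)
include he

theorem mul_left_comm (a b c : S) : a * (b * c) = b * (a * c) := by
  calc a * (b * c) = e * a * (b * c) := by rw [he]
    _ = e * b * (a * c) := by rw [mul_mul_mul_comm linv]
    _ = b * (a * c) := by rw [he]

theorem mul_right_eq_mul_left_rev (a b x : S) : a * b * x = x * e * (b * a) := by
  rw [mul_mul_mul_comm linv, he, linv]

theorem mul_left_eq_mul_right_rev (a b y : S) : y * (b * a) = a * b * (y * e) := by
  rw [mul_left_comm linv he (a * b), linv a b e, he]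

theorem range_mul_left_eq_range_mul_right (a b : S) :
    Set.range (a * b * ·) = Set.range (· * (b * a)) := by
  apply Set.Subset.antisymm <;> rw [Set.range_subset_iff] <;> intro x
  · exact ⟨x * e, (mul_right_eq_mul_left_rev linv he a b x).symm⟩
  · exact ⟨x * e, (mul_left_eq_mul_right_rev linv he a b x).symm⟩

end LASemigroup

/-- In an LA-semigroup with left identity, a²S = Sa². -/
theorem sq_S_eq_S_sq {S : Type*} [Mul S]
    (linv : ∀ a b c : S, (a * b) * c = (c * b) * a)
    (e : S) (he : ∀ a : S, e * a = a) :
    ∀ a : S, ({a * a} : Set S) * (Set.univ : Set S) =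
      (Set.univ : Set S) * ({a * a} : Set S) := by
  intro a
  rw [Set.singleton_mul, Set.mul_singleton, Set.image_univ, Set.image_univ]
  exact LASemigroup.range_mul_left_eq_range_mul_right linv he a a
end

section
/- An LA-semigroup S with left identity is intra-regular if and only if A = (SA)² for every left ideal A of S. -/
/-!
With a left identity, the law `(ab)c = (cb)a` yields the medial, paramedial and left-commutative
laws. By these, `a = (x a²) y` rewrites to `a = (y (x a)) a`, a product of two elements of `SA`
whenever `a` lies in a left ideal `A`; conversely `(SA)² ⊆ SA ⊆ A` always. For the other
direction, apply `A = (SA)²` to the left ideal `Sa ∋ a`: writing `a = (p a)(q a)` and rearranging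
gives `a = (e a²)(q p)`.
-/

open Pointwise

namespace LASemigroup

variable {S : Type*} [Mul S]

theorem medial (linv : ∀ a b c : S, (a * b) * c = (c * b) * a) (a b c d : S) :
    (a * b) * (c * d) = (a * c) * (b * d) := by
  rw [linv, linv c, ← linv]

theorem left_comm (linv : ∀ a b c : S, (a * b) * c = (c * b) * a) {e : S} (he : ∀ a, e * a = a)
    (a b c : S) : a * (b * c) = b * (a * c) := by
  simpa only [he] using medial linv e a b c

theorem paramedial (linv : ∀ a b c : S, (a * b) * c = (c * b) * a) {e : S}
    (he : ∀ a, e * a = a) (a b c d : S) : (a * b) * (c * d) = (d * c) * (b * a) := by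
  calc (a * b) * (c * d) = c * ((a * b) * d) := left_comm linv he _ _ _
    _ = c * ((d * b) * a) := by rw [linv]
    _ = (d * b) * (c * a) := left_comm linv he _ _ _
    _ = (d * c) * (b * a) := medial linv _ _ _ _

theorem univ_mul_sq_subset {A : Set S} (hA : Set.univ * A ⊆ A) :
    (Set.univ * A) * (Set.univ * A) ⊆ A :=
  (Set.mul_subset_mul_right (Set.subset_univ _)).trans <| (Set.mul_subset_mul_left hA).trans hA

theorem mem_univ_mul_sq_of_eq_mul_sq_mul (linv : ∀ a b c : S, (a * b) * c = (c * b) * a) {e : S}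
    (he : ∀ a, e * a = a) {A : Set S} (hA : Set.univ * A ⊆ A) {a x y : S} (ha : a ∈ A)
    (hxy : a = (x * (a * a)) * y) : a ∈ (Set.univ * A) * (Set.univ * A) := by
  have key : a = (y * (x * a)) * a := by
    rw [← linv, ← left_comm linv he, ← hxy]
  have hyxa : y * (x * a) ∈ Set.univ * A :=
    Set.mul_mem_mul (Set.mem_univ y) (hA (Set.mul_mem_mul (Set.mem_univ x) ha))
  have haSA : a ∈ Set.univ * A := key ▸ Set.mul_mem_mul (Set.mem_univ _) ha
  exact key ▸ Set.mul_mem_mul hyxa haSA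

theorem univ_mul_range_mul_right_subset (linv : ∀ a b c : S, (a * b) * c = (c * b) * a) {e : S}
    (he : ∀ a, e * a = a) (a : S) :
    Set.univ * Set.range (· * a) ⊆ Set.range (· * a) := by
  rintro _ ⟨s, -, _, ⟨t, rfl⟩, rfl⟩
  refine ⟨(s * e) * t, ?_⟩
  calc (s * e) * t * a = (a * t) * (s * e) := linv _ _ _
    _ = (e * s) * (t * a) := (paramedial linv he _ _ _ _).symm
    _ = s * (t * a) := by rw [he]

theorem exists_eq_mul_sq_mul_of_mem_sq (linv : ∀ a b c : S, (a * b) * c = (c * b) * a) {e : S}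
    (he : ∀ a, e * a = a) {a : S} (ha : a ∈ Set.range (· * a) * Set.range (· * a)) :
    ∃ x y : S, a = (x * (a * a)) * y := by
  obtain ⟨_, ⟨p, rfl⟩, _, ⟨q, rfl⟩, hpq⟩ := ha
  refine ⟨e, q * p, ?_⟩
  calc a = (p * a) * (q * a) := hpq.symm
    _ = (a * q) * (a * p) := paramedial linv he _ _ _ _
    _ = (a * a) * (q * p) := medial linv _ _ _ _
    _ = (e * (a * a)) * (q * p) := by rw [he]

end LASemigroup

open LASemigroup in
/-- An LA-semigroup with left identity is intra-regular iff A = (SA)² for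
every left ideal A. -/
theorem intra_regular_iff_left_ideal_SA_sq {S : Type*} [Mul S]
    (linv : ∀ a b c : S, (a * b) * c = (c * b) * a)
    (e : S) (he : ∀ a : S, e * a = a) :
    (∀ a : S, ∃ x y : S, a = (x * (a * a)) * y) ↔
    (∀ A : Set S, A.Nonempty → (Set.univ : Set S) * A ⊆ A →
      A = ((Set.univ : Set S) * A) * ((Set.univ : Set S) * A)) := by
  constructor
  · intro h A _ hA
    refine (univ_mul_sq_subset hA).antisymm' fun a ha => ?_
    obtain ⟨x, y, hxy⟩ := h a
    exact mem_univ_mul_sq_of_eq_mul_sq_mul linv he hA ha hxy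
  · intro h a
    have hL := univ_mul_range_mul_right_subset linv he a
    have ha : a ∈ Set.range (· * a) := ⟨e, he a⟩
    rw [h _ ⟨a, ha⟩ hL] at ha
    exact exists_eq_mul_sq_mul_of_mem_sq linv he (Set.mul_subset_mul hL hL ha)
end
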